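/- Let A = Σ_{j=1}^n λ_j u_j^{∘k} be odeco with orthonormal basis u_j of R^n, λ_j ≠ 0 for j ≤ r and λ_j = 0 for j > r, and V = [u_1 ... u_r]. Then for every x ∈ R^n, V^T (A x^{k-1}) = A_red (V^T x)^{k-1}, where A_red = A ×_1 V^T ×_2 ... ×_k V^T. That is, the projection z = V^T x intertwines the original dynamics ẋ = A x^{k-1} with the reduced dynamics ż = A_red z^{k-1}. -/

import Mathlib

open Finset

/-- For a `(k+1)`-th order cubical tensor `A` on `ℝ^m`, the contraction
`A ×₁ x ×₂ x ⋯ ×ₖ x ∈ ℝ^m` along the first `k` modes. -/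
def tvp {m k : ℕ} (A : (Fin (k + 1) → Fin m) → ℝ) (x : Fin m → ℝ) : Fin m → ℝ :=
  fun i => ∑ j : Fin k → Fin m, A (Fin.snoc j i) * ∏ p, x (j p)

/-- The Tucker product `A ×₁ M ×₂ M ⋯ ×_{k+1} M` with the same matrix `M : r × n`
along every mode. -/
def tuckerMap {n r k : ℕ} (A : (Fin (k + 1) → Fin n) → ℝ) (M : Fin r → Fin n → ℝ) :
    (Fin (k + 1) → Fin r) → ℝ :=
  fun i => ∑ j : Fin (k + 1) → Fin n, A j * ∏ p, M (i p) (j p)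

/-!
Writing `A = ∑ₐ λₐ uₐ^{⊗(k+1)}`, one has `A x^k = ∑ₐ λₐ ⟨uₐ, x⟩^k uₐ`, and the Tucker product of
`A` with `V` is again such a sum, with the vectors `V uₐ`. By orthonormality `V uₐ` is the `b`-th
standard basis vector when `uₐ` is the `b`-th row of `V`, and `0` otherwise, so both sides equal
`λ_b ⟨u_b, x⟩^k`.
-/

open Matrix

variable {ι : Type*} [Fintype ι]

def sumOuterPow {m : ℕ} (k : ℕ) (lam : ι → ℝ) (u : ι → Fin m → ℝ) :
    (Fin (k + 1) → Fin m) → ℝ :=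
  fun j => ∑ a, lam a * ∏ p, u a (j p)

theorem tvp_sumOuterPow {m k : ℕ} (lam : ι → ℝ) (u : ι → Fin m → ℝ) (x : Fin m → ℝ) :
    tvp (sumOuterPow k lam u) x = ∑ a, (lam a * (u a ⬝ᵥ x) ^ k) • u a := by
  ext i
  simp only [tvp, sumOuterPow, Fin.prod_univ_castSucc, Fin.snoc_castSucc, Fin.snoc_last,
    dotProduct, Fintype.sum_pow, Finset.sum_apply, Pi.smul_apply, smul_eq_mul, Finset.sum_mul,
    Finset.mul_sum]
  rw [Finset.sum_comm]
  refine Finset.sum_congr rfl fun a _ => Finset.sum_congr rfl fun j _ => ?_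
  rw [Finset.prod_mul_distrib]
  ring

theorem tuckerMap_sumOuterPow {n r k : ℕ} (lam : ι → ℝ) (u : ι → Fin n → ℝ)
    (M : Matrix (Fin r) (Fin n) ℝ) :
    tuckerMap (sumOuterPow k lam u) M = sumOuterPow k lam (fun a => M *ᵥ u a) := by
  ext i
  simp only [tuckerMap, sumOuterPow, mulVec, dotProduct, Fintype.prod_sum, Finset.sum_mul,
    Finset.mul_sum]
  rw [Finset.sum_comm]
  refine Finset.sum_congr rfl fun a _ => Finset.sum_congr rfl fun j _ => ?_
  simp only [Finset.prod_mul_distrib]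
  ring

theorem reduced_dynamics_intertwine_general {n r k : ℕ} (hr : r ≤ n)
    (lam : Fin n → ℝ) (u : Fin n → Fin n → ℝ)
    (hortho : ∀ a b, ∑ i, u a i * u b i = if a = b then (1 : ℝ) else 0)
    (A : (Fin (k + 1) → Fin n) → ℝ)
    (hA : ∀ j, A j = ∑ a, lam a * ∏ p, u a (j p))
    (x : Fin n → ℝ) (b : Fin r) :
    ∑ a, u (Fin.castLE hr b) a * tvp A x a
      = tvp (tuckerMap A (fun b' a => u (Fin.castLE hr b') a))
          (fun b' => ∑ a, u (Fin.castLE hr b') a * x a) b := by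
  obtain rfl : A = sumOuterPow k lam u := funext hA
  set c := Fin.castLE hr b
  have hdot : ∀ a, u c ⬝ᵥ u a = if c = a then 1 else 0 := hortho c
  let V : Matrix (Fin r) (Fin n) ℝ := fun b' a => u (Fin.castLE hr b') a
  have hVu : ∀ a, (V *ᵥ u a) b = if c = a then 1 else 0 := fun a => hortho c a
  have hVuc : V *ᵥ u c = Pi.single b 1 := by
    ext b'
    simp [V, c, mulVec, dotProduct, hortho, Pi.single_apply, Fin.castLE_inj]
  calc u c ⬝ᵥ tvp (sumOuterPow k lam u) x
      = lam c * (u c ⬝ᵥ x) ^ k := by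
        simp only [tvp_sumOuterPow, dotProduct_sum, dotProduct_smul, hdot, smul_eq_mul, mul_ite,
          mul_one, mul_zero, Finset.sum_ite_eq, Finset.mem_univ, if_true]
    _ = tvp (sumOuterPow k lam fun a => V *ᵥ u a) (V *ᵥ x) b := by
        simp only [tvp_sumOuterPow, Finset.sum_apply, Pi.smul_apply, hVu, smul_eq_mul, mul_ite,
          mul_one, mul_zero, Finset.sum_ite_eq, Finset.mem_univ, if_true, hVuc, single_dotProduct,
          one_mul]
        rfl
    _ = _ := by rw [← tuckerMap_sumOuterPow]; rfl

/-- Let `A = ∑_j lam j • u_j^{∘(k+1)}` be odeco with orthonormal basis `u_j`,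
`lam j ≠ 0` for `j ≤ r` and `lam j = 0` for `j > r`, and `V = [u_1 ⋯ u_r]`.
Then for every `x ∈ ℝ^n`, `Vᵀ (A x^k) = A_red (Vᵀ x)^k`, where
`A_red = A ×₁ Vᵀ ⋯ ×_{k+1} Vᵀ`: the projection `z = Vᵀ x` intertwines the original
dynamics `ẋ = A x^k` with the reduced dynamics `ż = A_red z^k`. -/
theorem reduced_dynamics_intertwine {n r k : ℕ} (hr : r ≤ n)
    (lam : Fin n → ℝ) (u : Fin n → Fin n → ℝ)
    (hortho : ∀ a b, ∑ i, u a i * u b i = if a = b then (1 : ℝ) else 0)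
    (A : (Fin (k + 1) → Fin n) → ℝ)
    (hA : ∀ j, A j = ∑ a, lam a * ∏ p, u a (j p))
    (hzero : ∀ a : Fin n, r ≤ (a : ℕ) → lam a = 0)
    (hnonzero : ∀ b : Fin r, lam (Fin.castLE hr b) ≠ 0)
    (x : Fin n → ℝ) (b : Fin r) :
    ∑ a, u (Fin.castLE hr b) a * tvp A x a
      = tvp (tuckerMap A (fun b' a => u (Fin.castLE hr b') a))
          (fun b' => ∑ a, u (Fin.castLE hr b') a * x a) b :=
  reduced_dynamics_intertwine_general hr lam u hortho A hA x b
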